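/- In the Laurent polynomial ring L', the ideal generated by the quadrics q_{ijkl} for all 1 ≤ i < j < k < l ≤ n equals the ideal generated by the linear elements z_{kl} − z_{2l} + z_{2k} for 3 ≤ k < l ≤ n, where z_{23} denotes 1. -/

import Mathlib

/-! Statement 12.  Labels `1, …, n` are the nonzero elements of `Fin (n+1)`.
`L' = K[z_{ij}^{±1} : (i,j) ∈ ℰ]` is realized as the monoid algebra of `ℤ^ℰ` over the
field `K`. -/

/-- Pairs `(i,j)` with `2 ≤ i < j ≤ n` and `(i,j) ≠ (2,3)`. -/
abbrev EIdx (n : ℕ) :=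
  {q : Fin (n + 1) × Fin (n + 1) //
    1 < q.1 ∧ q.1 < q.2 ∧ q ≠ ((2 : Fin (n + 1)), (3 : Fin (n + 1)))}

/-- The Laurent monomial `z̃_{ab}` in `L' = K[ℤ^ℰ]`: it is `z_{ab}` when
`(a,b) ∈ ℰ` and `1` otherwise (in particular `z̃_{23} = 1`). -/
noncomputable def Zt (n : ℕ) (K : Type*) [Field K] (a b : Fin (n + 1)) :
    AddMonoidAlgebra K (EIdx n → ℤ) :=
  if h : 1 < a ∧ a < b ∧ (a, b) ≠ ((2 : Fin (n + 1)), (3 : Fin (n + 1))) then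
    AddMonoidAlgebra.single (Pi.single (⟨(a, b), h⟩ : EIdx n) 1) 1
  else 1

/-- The quadric `q_{ijkl} = z̃_{ij}z̃_{kl} - z̃_{ik}z̃_{jl} + z̃_{il}z̃_{jk} ∈ L'`. -/
noncomputable def qpoly (n : ℕ) (K : Type*) [Field K] (i j k l : Fin (n + 1)) :
    AddMonoidAlgebra K (EIdx n → ℤ) :=
  Zt n K i j * Zt n K k l - Zt n K i k * Zt n K j l + Zt n K i l * Zt n K j k

/-! Put `w 2 = 0` and `w x = z̃_{2x}` otherwise, so that the linear generators are exactly the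
forms `z̃_{ab} - w b + w a` with `2 ≤ a < b` (the form with `a = 2` being `0`). Modulo these
forms `z̃_{ab} ≡ w b - w a` for `2 ≤ a < b`, and the three-term Plücker expression in such
differences vanishes identically; when `i = 1`, where `z̃_{1x} = 1`, the quadric `q_{1jkl}` is
itself a signed sum of three linear forms. Conversely `q_{12ab}` is the linear generator
indexed by `(a, b)`. -/

open Ideal

section Plucker

variable {R ι : Type*} [CommRing R] {I : Ideal R} (z : ι → ι → R) (w : ι → R)

theorem plucker_mem_of_sub_add_mem {i j k l : ι}
    (hij : z i j - w j + w i ∈ I) (hik : z i k - w k + w i ∈ I)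
    (hil : z i l - w l + w i ∈ I) (hjk : z j k - w k + w j ∈ I)
    (hjl : z j l - w l + w j ∈ I) (hkl : z k l - w l + w k ∈ I) :
    z i j * z k l - z i k * z j l + z i l * z j k ∈ I := by
  have key : z i j * z k l - z i k * z j l + z i l * z j k =
      (z i j * (z k l - w l + w k) + (w l - w k) * (z i j - w j + w i))
        - (z i k * (z j l - w l + w j) + (w l - w j) * (z i k - w k + w i))
        + (z i l * (z j k - w k + w j) + (w k - w j) * (z i l - w l + w i)) := by
    ring
  rw [key]
  exact add_mem
    (sub_mem (add_mem (I.mul_mem_left _ hkl) (I.mul_mem_left _ hij))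
      (add_mem (I.mul_mem_left _ hjl) (I.mul_mem_left _ hik)))
    (add_mem (I.mul_mem_left _ hjk) (I.mul_mem_left _ hil))

theorem three_term_mem_of_sub_add_mem {j k l : ι}
    (hjk : z j k - w k + w j ∈ I) (hjl : z j l - w l + w j ∈ I)
    (hkl : z k l - w l + w k ∈ I) :
    z k l - z j l + z j k ∈ I := by
  have key : z k l - z j l + z j k =
      (z k l - w l + w k) - (z j l - w l + w j) + (z j k - w k + w j) := by
    ring
  rw [key]
  exact add_mem (sub_mem hkl hjl) hjk

end Plucker

theorem Fin.val_one_of_one_le {n : ℕ} (hn : 1 ≤ n) : ((1 : Fin (n + 1)) : ℕ) = 1 := by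
  rw [Fin.coe_ofNat_eq_mod, Nat.mod_eq_of_lt (by omega)]

theorem Fin.val_two_of_two_le {n : ℕ} (hn : 2 ≤ n) : ((2 : Fin (n + 1)) : ℕ) = 2 := by
  rw [Fin.coe_ofNat_eq_mod, Nat.mod_eq_of_lt (by omega)]

section Laurent

variable {n : ℕ} {K : Type*} [Field K]

noncomputable def linearIdeal (n : ℕ) (K : Type*) [Field K] :
    Ideal (AddMonoidAlgebra K (EIdx n → ℤ)) :=
  Ideal.span {f | ∃ a b : Fin (n + 1), (2 : Fin (n + 1)) < a ∧ a < b ∧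
    f = Zt n K a b - Zt n K 2 b + Zt n K 2 a}

/-- The `w` of the proof: at `2` it is `0`, not `Zt n K 2 2 = 1`. -/
noncomputable def ztTwo (n : ℕ) (K : Type*) [Field K] (x : Fin (n + 1)) :
    AddMonoidAlgebra K (EIdx n → ℤ) :=
  if x = 2 then 0 else Zt n K 2 x

theorem Zt_eq_one_of_not_one_lt {a : Fin (n + 1)} (b : Fin (n + 1))
    (ha : ¬ (1 : Fin (n + 1)) < a) : Zt n K a b = 1 :=
  dif_neg fun h => ha h.1

theorem Zt_sub_ztTwo_add_mem_linearIdeal (hn : 2 ≤ n) {a b : Fin (n + 1)}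
    (ha : 1 < a) (hab : a < b) :
    Zt n K a b - ztTwo n K b + ztTwo n K a ∈ linearIdeal n K := by
  have hv1 := Fin.val_one_of_one_le (by omega : 1 ≤ n)
  have hv2 := Fin.val_two_of_two_le hn
  have hb : b ≠ 2 := by
    simp only [Fin.lt_def, Fin.ne_iff_vne] at *
    omega
  by_cases ha2 : a = 2
  · subst ha2
    simp [ztTwo, hb]
  · have ha2' : 2 < a := by
      simp only [Fin.lt_def, Fin.ne_iff_vne] at *
      omega
    simp only [ztTwo, if_neg hb, if_neg ha2]
    exact subset_span ⟨a, b, ha2', hab, rfl⟩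

theorem qpoly_mem_linearIdeal (hn : 2 ≤ n) {i j k l : Fin (n + 1)}
    (hi : 0 < i) (hij : i < j) (hjk : j < k) (hkl : k < l) :
    qpoly n K i j k l ∈ linearIdeal n K := by
  have mem : ∀ {a b : Fin (n + 1)}, 1 < a → a < b →
      Zt n K a b - ztTwo n K b + ztTwo n K a ∈ linearIdeal n K :=
    Zt_sub_ztTwo_add_mem_linearIdeal hn
  by_cases h1 : (1 : Fin (n + 1)) < i
  · exact plucker_mem_of_sub_add_mem _ _ (mem h1 hij) (mem h1 (hij.trans hjk))
      (mem h1 (hij.trans (hjk.trans hkl))) (mem (h1.trans hij) hjk)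
      (mem (h1.trans hij) (hjk.trans hkl)) (mem (h1.trans (hij.trans hjk)) hkl)
  · have h1j : 1 < j := by
      have hv1 := Fin.val_one_of_one_le (by omega : 1 ≤ n)
      simp only [Fin.lt_def] at *
      omega
    rw [qpoly, Zt_eq_one_of_not_one_lt j h1, Zt_eq_one_of_not_one_lt k h1,
      Zt_eq_one_of_not_one_lt l h1, one_mul, one_mul, one_mul]
    exact three_term_mem_of_sub_add_mem _ _ (mem h1j hjk) (mem h1j (hjk.trans hkl))
      (mem (h1j.trans hjk) hkl)

theorem qpoly_one_two (a b : Fin (n + 1)) :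
    qpoly n K 1 2 a b = Zt n K a b - Zt n K 2 b + Zt n K 2 a := by
  have h11 : ¬ (1 : Fin (n + 1)) < 1 := lt_irrefl _
  rw [qpoly, Zt_eq_one_of_not_one_lt 2 h11, Zt_eq_one_of_not_one_lt a h11,
    Zt_eq_one_of_not_one_lt b h11]
  ring

end Laurent

/-- In the Laurent polynomial ring `L'`, the ideal generated by the
quadrics `q_{ijkl}` for all labels `1 ≤ i < j < k < l ≤ n` equals the ideal generated
by the linear elements `z_{kl} - z_{2l} + z_{2k}` for `3 ≤ k < l ≤ n`, with `z_{23}`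
denoting `1`. -/
theorem qpoly_ideal_eq_linear_ideal (n : ℕ) (hn : 4 ≤ n) (K : Type*) [Field K] :
    Ideal.span {f : AddMonoidAlgebra K (EIdx n → ℤ) |
        ∃ i j k l : Fin (n + 1), 0 < i ∧ i < j ∧ j < k ∧ k < l ∧
          f = qpoly n K i j k l} =
      Ideal.span {f : AddMonoidAlgebra K (EIdx n → ℤ) |
        ∃ a b : Fin (n + 1), (2 : Fin (n + 1)) < a ∧ a < b ∧
          f = Zt n K a b - Zt n K 2 b + Zt n K 2 a} := by
  have h01 : (0 : Fin (n + 1)) < 1 := by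
    simp only [Fin.lt_def, Fin.val_zero, Fin.val_one_of_one_le (by omega : 1 ≤ n)]; omega
  have h12 : (1 : Fin (n + 1)) < 2 := by
    simp only [Fin.lt_def, Fin.val_one_of_one_le (by omega : 1 ≤ n),
      Fin.val_two_of_two_le (by omega : 2 ≤ n)]; omega
  apply le_antisymm
  · rw [span_le]
    rintro f ⟨i, j, k, l, hi, hij, hjk, hkl, rfl⟩
    exact qpoly_mem_linearIdeal (by omega) hi hij hjk hkl
  · rw [span_le]
    rintro f ⟨a, b, ha, hab, rfl⟩
    exact subset_span ⟨1, 2, a, b, h01, h12, ha, hab, (qpoly_one_two a b).symm⟩
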